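/- (Uniform control of F on orbit minima.) Let n ≥ 3 and set c_n = sin(π(1 − 1/n))/(1 − 1/n). For every N ≥ n, every λ, μ, ν ∈ ℤ^n, and every I ∈ J_{n,N} with I_n = 0 which is the lexicographically smallest element of its orbit Ω(I, N) under Φ_N, one has N^{−(n−1)−(n−1)(n−2)/2} · |F(I, λ, μ, ν, N)| ≤ n^{3n} · (2 c_n)^{−n(n−1)/2} / Δ(I). -/

import Mathlib

open scoped BigOperators

noncomputable section

/-- The set of pairs `(r,s)` with `r < s` in `Fin n`. -/
def pairsLt (n : ℕ) : Finset (Fin n × Fin n) :=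
  Finset.univ.filter (fun p => p.1 < p.2)

/-- Vandermonde determinant `Δ(x) = ∏_{r<s} (x_r − x_s)` of a complex tuple. -/
def vandC {n : ℕ} (x : Fin n → ℂ) : ℂ := ∏ p ∈ pairsLt n, (x p.1 - x p.2)

/-- Vandermonde determinant `Δ(I) = ∏_{r<s} (I_r − I_s)` of an integer tuple. -/
def vandZ {n : ℕ} (I : Fin n → ℤ) : ℤ := ∏ p ∈ pairsLt n, (I p.1 - I p.2)

/-- `2πi` as a complex number. -/
def twoPiI : ℂ := 2 * (Real.pi : ℂ) * Complex.I

/-- The function `F(I, λ, μ, ν, N)` (with 0-based indexing, so `λ_s + s − 1`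
becomes `lam s + s`). -/
def Fdet (n N : ℕ) (I : Fin n → ℝ) (lam mu nu : Fin n → ℤ) : ℂ :=
  (Matrix.of fun r s : Fin n =>
      Complex.exp (twoPiI * (I r : ℂ) * ((lam s : ℂ) + ((s : ℕ) : ℂ)) / (N : ℂ))).det *
  (Matrix.of fun r s : Fin n =>
      Complex.exp (twoPiI * (I r : ℂ) * ((mu s : ℂ) + ((s : ℕ) : ℂ)) / (N : ℂ))).det *
  (Matrix.of fun r s : Fin n =>
      Complex.exp (-(twoPiI * (I r : ℂ) * ((nu s : ℂ) + ((s : ℕ) : ℂ)) / (N : ℂ)))).det /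
  vandC (fun r => Complex.exp (twoPiI * (I r : ℂ) / (N : ℂ)))

/-- `J_{n,N}`: strictly decreasing integer tuples with entries in `{0, …, N−1}`. -/
def JFinset (n N : ℕ) : Finset (Fin n → ℤ) :=
  (Fintype.piFinset fun _ : Fin n => Finset.Icc (0 : ℤ) ((N : ℤ) - 1)).filter
    (fun I => ∀ r s : Fin n, r < s → I s < I r)

/-- `J` is in the orbit of `I` under the translation action `Φ_N`. -/
def inOrbit (n N : ℕ) (I J : Fin n → ℤ) : Prop :=
  J ∈ JFinset n N ∧
    ∃ l : ℤ, Multiset.map J Finset.univ.val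
      = Multiset.map (fun r : Fin n => (I r + l) % (N : ℤ)) Finset.univ.val

/-- Strict lexicographic order on tuples. -/
def LexLt {n : ℕ} (I J : Fin n → ℤ) : Prop :=
  ∃ r : Fin n, (∀ q : Fin n, q < r → I q = J q) ∧ I r < J r

/-- `I` is the lexicographically smallest element of its orbit. -/
def IsOrbitMin (n N : ℕ) (I : Fin n → ℤ) : Prop :=
  ∀ J : Fin n → ℤ, inOrbit n N I J → J = I ∨ LexLt I J

/-!
Write `x_r = exp (2πi I_r / N)`. The three determinants have unimodular entries, so each has
modulus at most `n! ≤ n^n`. For the Vandermonde factor, `|x_r - x_s| = 2 sin (π (I_r - I_s) / N)`,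
and concavity of `sin` on `[0, π]` bounds this below by `2 c_n (I_r - I_s) / N` as soon as
`I_r - I_s ≤ (1 - 1/n) N`. This spread bound is where orbit minimality enters: rotating `I` by
`-I_k` and re-sorting produces an orbit element with first entry `N - (I_k - I_{k+1})`, so every
gap `I_k - I_{k+1}` is at most `N - I_1`; adding up the `n - 1` gaps down to `I_n = 0` gives
`n I_1 ≤ (n - 1) N`.
-/

open Finset Real

theorem card_pairsLt (n : ℕ) : #(pairsLt n) = n.choose 2 := by
  simpa [pairsLt] using card_product_filter_lt (s := (univ : Finset (Fin n)))

theorem Real.sin_div_mul_le_sin {a x : ℝ} (ha : 0 < a) (ha1 : a ≤ 1) (hx : 0 ≤ x) (hxa : x ≤ a) :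
    sin (π * a) / a * x ≤ sin (π * x) := by
  have hconc := strictConcaveOn_sin_Icc.concaveOn.2 (x := 0) (y := π * a)
    ⟨le_rfl, pi_pos.le⟩ ⟨by positivity, by nlinarith [pi_pos]⟩
    (sub_nonneg.2 ((div_le_one ha).2 hxa)) (by positivity) (sub_add_cancel 1 (x / a))
  have hxpi : x / a * (π * a) = π * x := by field_simp
  simp only [smul_eq_mul, mul_zero, sin_zero, zero_add, hxpi] at hconc
  calc sin (π * a) / a * x = x / a * sin (π * a) := by ring
    _ ≤ sin (π * x) := hconc

theorem Complex.norm_exp_mul_I_sub_exp_mul_I (a b : ℝ) :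
    ‖exp (a * I) - exp (b * I)‖ = 2 * |Real.sin ((a - b) / 2)| := by
  have hsplit : exp (a * I) - exp (b * I) = exp (b * I) * (exp (I * (a - b : ℝ)) - 1) := by
    rw [mul_sub, mul_one, ← exp_add]; push_cast; ring_nf
  rw [hsplit, norm_mul, norm_exp_ofReal_mul_I, one_mul, norm_exp_I_mul_ofReal_sub_one,
    norm_mul, Real.norm_eq_abs, Real.norm_eq_abs, abs_two]

theorem norm_det_le_pow_card {R ι : Type*} [NormedCommRing R] [NormMulClass R] [Nontrivial R]
    [Fintype ι] [DecidableEq ι] (A : Matrix ι ι R) (hA : ∀ i j, ‖A i j‖ ≤ 1) :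
    ‖A.det‖ ≤ (Fintype.card ι : ℝ) ^ Fintype.card ι := by
  have := Matrix.det_le (abv := IsAbsoluteValue.toAbsoluteValue (norm : R → ℝ)) hA
  simp only [IsAbsoluteValue.toAbsoluteValue_apply, one_pow, nsmul_eq_mul, mul_one] at this
  exact this.trans (by exact_mod_cast Nat.factorial_le_pow _)

theorem mem_JFinset_iff {n N : ℕ} {I : Fin n → ℤ} :
    I ∈ JFinset n N ↔ StrictAnti I ∧ ∀ r, 0 ≤ I r ∧ I r < N := by
  simp only [JFinset, mem_filter, Fintype.mem_piFinset, mem_Icc, Int.le_sub_one_iff]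
  exact ⟨fun h => ⟨fun r s hrs => h.2 r s hrs, h.1⟩, fun h => ⟨h.2, fun r s hrs => h.1 hrs⟩⟩

namespace IsOrbitMin

variable {n N : ℕ} {I : Fin n → ℤ}

/-- Re-sorting the residues `(I j + l) % N` gives an element of the orbit, whose first entry is the
largest of them; minimality of `I` bounds it from below. -/
theorem exists_le_emod_add (hI : I ∈ JFinset n N) (hmin : IsOrbitMin n N I) (r : Fin n)
    (l : ℤ) : ∃ j, I r ≤ (I j + l) % N := by
  obtain ⟨hanti, hrange⟩ := mem_JFinset_iff.1 hI
  have hN : (0 : ℤ) < N := by linarith [hrange r]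
  set f : Fin n → ℤ := fun j => (I j + l) % N
  have hf : Function.Injective f := by
    intro i j hij
    have hmod : I i % N = I j % N := Int.ModEq.add_right_cancel' l hij
    rw [Int.emod_eq_of_lt (hrange i).1 (hrange i).2,
      Int.emod_eq_of_lt (hrange j).1 (hrange j).2] at hmod
    exact hanti.injective hmod
  set s := univ.image f
  have hs : #s = n := by rw [card_image_of_injective _ hf, card_univ, Fintype.card_fin]
  set J : Fin n → ℤ := fun r => s.orderEmbOfFin hs r.rev
  have hJanti : StrictAnti J := (s.orderEmbOfFin hs).strictMono.comp_strictAnti Fin.rev_strictAnti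
  have hJs : ∀ r, J r ∈ s := fun r => s.orderEmbOfFin_mem hs _
  have hJ : inOrbit n N I J := by
    refine ⟨mem_JFinset_iff.2 ⟨hJanti, fun r => ?_⟩, l, ?_⟩
    · obtain ⟨j, -, hj⟩ := mem_image.1 (hJs r)
      rw [← hj]
      exact ⟨Int.emod_nonneg _ hN.ne', Int.emod_lt_of_pos _ hN⟩
    · have himage : univ.image J = s := eq_of_subset_of_card_le
        (image_subset_iff.2 fun r _ => hJs r)
        (by rw [hs, card_image_of_injective _ hJanti.injective, card_univ, Fintype.card_fin])
      rw [← image_val_of_injOn hJanti.injective.injOn, himage, image_val_of_injOn hf.injOn]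
  let r₀ : Fin n := ⟨0, r.pos⟩
  have h0 : I r₀ ≤ J r₀ := by
    rcases hmin J hJ with h | ⟨q, hq, hlt⟩
    · rw [h]
    · rcases Nat.eq_zero_or_pos q with hq0 | hq0
      · rw [show r₀ = q from Fin.ext hq0.symm]; exact hlt.le
      · exact (hq r₀ hq0).le
  obtain ⟨j, -, hj⟩ := mem_image.1 (hJs r₀)
  exact ⟨j, (hanti.antitone (Nat.zero_le r)).trans (h0.trans hj.ge)⟩

theorem sub_succ_le (hI : I ∈ JFinset n N) (hmin : IsOrbitMin n N I) (k : ℕ) (hk : k + 1 < n) :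
    I ⟨k, by omega⟩ - I ⟨k + 1, hk⟩ ≤ N - I ⟨0, by omega⟩ := by
  obtain ⟨hanti, hrange⟩ := mem_JFinset_iff.1 hI
  obtain ⟨j, hj⟩ := exists_le_emod_add hI hmin ⟨0, by omega⟩ (-I ⟨k, by omega⟩)
  obtain ⟨hj0, hjN⟩ := hrange j
  obtain ⟨hk0, hkN⟩ := hrange ⟨k, by omega⟩
  obtain ⟨hsucc0, hsuccN⟩ := hrange ⟨k + 1, hk⟩
  rcases le_or_gt (I ⟨k, by omega⟩) (I j) with hkj | hjk
  · rw [Int.emod_eq_of_lt (by omega) (by omega)] at hj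
    omega
  · have hsucc : I j ≤ I ⟨k + 1, hk⟩ := hanti.antitone (Nat.succ_le_of_lt (hanti.lt_iff_gt.1 hjk))
    rw [Int.emod_eq_add_self_emod, Int.emod_eq_of_lt (by omega) (by omega)] at hj
    omega

theorem mul_le_sub_one_mul (hI : I ∈ JFinset n N) (hmin : IsOrbitMin n N I)
    (hlast : ∀ r : Fin n, (r : ℕ) = n - 1 → I r = 0) (r : Fin n) :
    (n : ℤ) * I r ≤ (n - 1) * N := by
  have htel : ∀ k (hk : k < n), I ⟨0, r.pos⟩ - I ⟨k, hk⟩ ≤ k * (N - I ⟨0, r.pos⟩) := by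
    intro k
    induction k with
    | zero => simp
    | succ k ih =>
      intro hk
      have := sub_succ_le hI hmin k hk
      push_cast
      linarith [ih (by omega)]
  have hn := r.pos
  have hhead := htel (n - 1) (by omega)
  rw [hlast ⟨n - 1, _⟩ rfl, Nat.cast_sub hn] at hhead
  have hr : I r ≤ I ⟨0, r.pos⟩ := (mem_JFinset_iff.1 hI).1.antitone (Nat.zero_le r)
  push_cast at hhead
  nlinarith

end IsOrbitMin

theorem mul_le_norm_exp_sub_exp {a : ℝ} (ha : 0 < a) (ha1 : a ≤ 1) {N : ℕ} (hN : 0 < N)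
    {p q : ℝ} (hqp : q ≤ p) (hpq : p - q ≤ a * N) :
    2 * (sin (π * a) / a) / N * (p - q) ≤
      ‖Complex.exp (twoPiI * p / N) - Complex.exp (twoPiI * q / N)‖ := by
  have hN' : (0 : ℝ) < N := Nat.cast_pos.2 hN
  set x := (p - q) / N with hxdef
  have hx : 0 ≤ x := div_nonneg (sub_nonneg.2 hqp) hN'.le
  have hxa : x ≤ a := (div_le_iff₀ hN').2 hpq
  have harg : ∀ t : ℝ, twoPiI * t / N = ((2 * π * t / N : ℝ) : ℂ) * Complex.I := fun t => by
    rw [twoPiI]; push_cast; ring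
  have hhalf : (2 * π * p / N - 2 * π * q / N) / 2 = π * x := by rw [hxdef]; field_simp
  rw [harg, harg, Complex.norm_exp_mul_I_sub_exp_mul_I, hhalf,
    abs_of_nonneg (sin_nonneg_of_nonneg_of_le_pi (by positivity) (by nlinarith [pi_pos]))]
  calc 2 * (sin (π * a) / a) / N * (p - q)
    _ = 2 * (sin (π * a) / a * x) := by rw [hxdef]; field_simp
    _ ≤ 2 * sin (π * x) := by gcongr; exact Real.sin_div_mul_le_sin ha ha1 hx hxa

theorem vandZ_pos {n : ℕ} {I : Fin n → ℤ} (hI : StrictAnti I) : 0 < vandZ I :=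
  prod_pos fun _ hp => sub_pos.2 (hI (mem_filter.1 hp).2)

theorem mul_vandZ_le_norm_vandC {n N : ℕ} {I : Fin n → ℤ} (hI : StrictAnti I) (hN : 0 < N)
    {a : ℝ} (ha : 0 < a) (ha1 : a ≤ 1) (hspread : ∀ r s, r < s → (I r - I s : ℝ) ≤ a * N) :
    (2 * (sin (π * a) / a) / N) ^ n.choose 2 * (vandZ I : ℝ) ≤
      ‖vandC fun r => Complex.exp (twoPiI * ((I r : ℝ) : ℂ) / N)‖ := by
  rw [← card_pairsLt, ← prod_const, vandZ, vandC, norm_prod, Int.cast_prod, ← prod_mul_distrib]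
  refine prod_le_prod (fun p hp => ?_) fun p hp => ?_
  · have hsin := sin_nonneg_of_nonneg_of_le_pi (x := π * a) (by positivity) (by nlinarith [pi_pos])
    have hlt : (I p.2 : ℝ) < I p.1 := by exact_mod_cast hI (mem_filter.1 hp).2
    push_cast
    exact mul_nonneg (by positivity) (by linarith)
  · have hlt := (mem_filter.1 hp).2
    push_cast
    exact mul_le_norm_exp_sub_exp ha ha1 hN (by exact_mod_cast (hI hlt).le) (hspread _ _ hlt)

theorem statement9_general (n : ℕ) (hn : 3 ≤ n) (N : ℕ)
    (lam mu nu : Fin n → ℤ)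
    (I : Fin n → ℤ) (hI : I ∈ JFinset n N)
    (hlast : ∀ r : Fin n, (r : ℕ) = n - 1 → I r = 0)
    (hmin : IsOrbitMin n N I) :
    ((N : ℝ) ^ ((n - 1) + (n - 1) * (n - 2) / 2))⁻¹ *
        ‖Fdet n N (fun r => (I r : ℝ)) lam mu nu‖
      ≤ (n : ℝ) ^ (3 * n) *
          ((2 * (Real.sin (Real.pi * (1 - 1 / n)) / (1 - 1 / n))) ^ (n * (n - 1) / 2))⁻¹ /
          (vandZ I : ℝ) := by
  obtain ⟨hanti, hrange⟩ := mem_JFinset_iff.1 hI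
  have hN : 0 < N := by have := hrange ⟨0, by omega⟩; omega
  have hn' : (3 : ℝ) ≤ n := by exact_mod_cast hn
  set a : ℝ := 1 - 1 / n with ha_def
  have ha : 0 < a := by rw [ha_def, sub_pos, div_lt_one] <;> linarith
  have ha1 : a < 1 := by rw [ha_def]; linarith [show 0 < 1 / (n : ℝ) by positivity]
  have hspread : ∀ r s, r < s → (I r - I s : ℝ) ≤ a * N := by
    intro r s _
    have hhead : (n : ℝ) * I r ≤ (n - 1) * N := by exact_mod_cast hmin.mul_le_sub_one_mul hI hlast r
    have hs : (0 : ℝ) ≤ I s := by exact_mod_cast (hrange s).1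
    rw [ha_def, show (1 - 1 / n) * (N : ℝ) = (n - 1) * N / n by field_simp,
      le_div_iff₀ (by positivity)]
    nlinarith
  have hV := mul_vandZ_le_norm_vandC hanti hN ha ha1.le hspread
  have hsin : 0 < sin (π * a) := sin_pos_of_pos_of_lt_pi (by positivity) (by nlinarith [pi_pos])
  have hΔ : (0 : ℝ) < vandZ I := by exact_mod_cast vandZ_pos hanti
  have hK : (n - 1) + (n - 1) * (n - 2) / 2 = n.choose 2 := by
    rcases n with _ | m
    · rfl
    · simp [Nat.choose_succ_succ', Nat.choose_two_right]
  rw [hK, ← Nat.choose_two_right, Fdet, norm_div, norm_mul, norm_mul]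
  calc _ ≤ ((N : ℝ) ^ n.choose 2)⁻¹ * ((n : ℝ) ^ n * n ^ n * n ^ n /
        ((2 * (sin (π * a) / a) / N) ^ n.choose 2 * vandZ I)) := by
        gcongr
        all_goals
          refine (norm_det_le_pow_card _ fun r s => ?_).trans_eq (by rw [Fintype.card_fin])
          simp [Complex.norm_exp, twoPiI, Complex.div_re]
    _ = _ := by rw [div_pow]; field_simp; ring

/-- **Uniform control of `F` on orbit minima.** -/
theorem statement9 (n : ℕ) (hn : 3 ≤ n) (N : ℕ) (hnN : n ≤ N)
    (lam mu nu : Fin n → ℤ)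
    (I : Fin n → ℤ) (hI : I ∈ JFinset n N)
    (hlast : ∀ r : Fin n, (r : ℕ) = n - 1 → I r = 0)
    (hmin : IsOrbitMin n N I) :
    ((N : ℝ) ^ ((n - 1) + (n - 1) * (n - 2) / 2))⁻¹ *
        ‖Fdet n N (fun r => (I r : ℝ)) lam mu nu‖
      ≤ (n : ℝ) ^ (3 * n) *
          ((2 * (Real.sin (Real.pi * (1 - 1 / n)) / (1 - 1 / n))) ^ (n * (n - 1) / 2))⁻¹ /
          (vandZ I : ℝ) :=
  statement9_general n hn N lam mu nu I hI hlast hmin
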